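/- Let Q = T[H_1, …, H_t] be a semicomplete composition which has a 3-king. If T has no source, then Q has at least two 3-kings. In particular, every strong semicomplete composition Q = T[H_1, …, H_t] has a 3-king, and a vertex v ∈ V(H_i) is a 3-king of Q if and only if u_i is a 3-king of T. -/

import Mathlib

universe u v

/-- There is a directed walk of length at most `n` from `x` to `y`. -/
def ReachIn {V : Type u} (A : V → V → Prop) : ℕ → V → V → Prop
  | 0 => fun x y => x = y
  | n + 1 => fun x y => x = y ∨ ∃ z, A x z ∧ ReachIn A n z y

/-- A digraph is strong if every vertex can reach every other vertex. -/
def IsStrong {V : Type u} (A : V → V → Prop) : Prop :=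
  ∀ x y : V, Relation.ReflTransGen A x y

/-- A digraph is loopless if it has no loops. -/
def Loopless {V : Type u} (A : V → V → Prop) : Prop := ∀ x, ¬ A x x

/-- A digraph is semicomplete if there is at least one arc between any two distinct vertices. -/
def Semicomplete {V : Type u} (A : V → V → Prop) : Prop :=
  ∀ x y : V, x ≠ y → A x y ∨ A y x

/-- The subdigraph induced on a set `s` of vertices. -/
def Restrict {V : Type u} (A : V → V → Prop) (s : Set V) :
    {v // v ∈ s} → {v // v ∈ s} → Prop := fun x y => A x.1 y.1

/-- `S` is a separator: deleting `S` leaves a non-strong digraph. -/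
def IsSeparator {V : Type u} (A : V → V → Prop) (S : Set V) : Prop :=
  ¬ IsStrong (Restrict A Sᶜ)

/-- A digraph is `k`-strong-connected if every separator has at least `k` vertices. -/
def KStrong {V : Type u} (A : V → V → Prop) (k : ℕ) : Prop :=
  ∀ S : Set V, IsSeparator A S → k ≤ S.ncard

/-- The composition `T[H₁, …, H_t]`. -/
def Comp {t : ℕ} (T : Fin t → Fin t → Prop) (V : Fin t → Type u)
    (H : ∀ i, V i → V i → Prop) : (Σ i, V i) → (Σ i, V i) → Prop :=
  fun p q => T p.1 q.1 ∨ ∃ h : p.1 = q.1, H q.1 (h ▸ p.2) q.2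

/-- The complement of the underlying (simple) graph of a digraph. -/
def complUnderlying {V : Type u} (A : V → V → Prop) : SimpleGraph V where
  Adj x y := x ≠ y ∧ ¬ A x y ∧ ¬ A y x
  symm := ⟨fun x y ⟨h1, h2, h3⟩ => ⟨h1.symm, h3, h2⟩⟩
  loopless := ⟨fun x h => h.1 rfl⟩

/-- `x` is a `k`-king: it reaches every vertex by a path of length at most `k`. -/
def IsKKing {V : Type u} (A : V → V → Prop) (k : ℕ) (x : V) : Prop :=
  ∀ y, ReachIn A k x y

/-- A (directed) path given as a list of vertices. -/
def IsPathList {V : Type u} (A : V → V → Prop) (l : List V) : Prop :=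
  l.Nodup ∧ l.Chain' A

/-- A (directed) cycle given as a list of distinct vertices. -/
def IsCycleList {V : Type u} (A : V → V → Prop) (l : List V) : Prop :=
  2 ≤ l.length ∧ l.Nodup ∧ l.Chain' A ∧
    ∀ x ∈ l.getLast?, ∀ y ∈ l.head?, A x y

/-
A 3-king `u_i` of the semicomplete digraph `T` with an in-neighbour lies on a cycle of
length 2 or 3; walking around that cycle lets it reach the other vertices of its own block,
so every vertex of its block is a 3-king of `Q`. When `T` has no source, a second 3-king outside the block `i`
of a given one is found as in Landau's theorem: among the in-neighbours of `u_i`, one of maximum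
out-degree within that in-neighbourhood is a 2-king of `T`. If `Q` is strong, `T` has no source,
and conversely a 3-king of `Q` projects to a 3-king of `T`.
-/

namespace ReachIn

variable {α : Type*} {A : α → α → Prop}

lemma refl (n : ℕ) (x : α) : ReachIn A n x x := by
  cases n with
  | zero => rfl
  | succ n => exact Or.inl rfl

lemma succ {n : ℕ} {x y : α} (h : ReachIn A n x y) : ReachIn A (n + 1) x y := by
  induction n generalizing x with
  | zero => exact Or.inl h
  | succ n ih =>
    rcases h with h | ⟨z, hxz, hzy⟩
    · exact Or.inl h
    · exact Or.inr ⟨z, hxz, ih hzy⟩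

variable {t : ℕ} {T : Fin t → Fin t → Prop} {V : Fin t → Type*} {H : ∀ i, V i → V i → Prop}

lemma fst_of_comp {n : ℕ} {x y : Σ i, V i} (h : ReachIn (Comp T V H) n x y) :
    ReachIn T n x.1 y.1 := by
  induction n generalizing x with
  | zero => exact congrArg Sigma.fst h
  | succ n ih =>
    rcases h with h | ⟨z, hxz, hzy⟩
    · exact Or.inl (congrArg Sigma.fst h)
    · rcases hxz with hxz | ⟨hxz, _⟩
      · exact Or.inr ⟨z.1, hxz, ih hzy⟩
      · rw [hxz]
        exact (ih hzy).succ

lemma comp_of_ne [∀ i, Nonempty (V i)] {n : ℕ} {i j : Fin t} (h : ReachIn T n i j)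
    (hij : i ≠ j) (v : V i) (w : V j) : ReachIn (Comp T V H) n ⟨i, v⟩ ⟨j, w⟩ := by
  induction n generalizing i with
  | zero => exact absurd h hij
  | succ n ih =>
    rcases h with h | ⟨z, hiz, hzj⟩
    · exact absurd h hij
    · by_cases hz : z = j
      · subst hz
        exact Or.inr ⟨⟨z, w⟩, Or.inl hiz, refl _ _⟩
      · exact Or.inr ⟨⟨z, Classical.arbitrary _⟩, Or.inl hiz, ih hzj hz _⟩

end ReachIn

section ShortCycle

variable {α : Type*} {T : α → α → Prop}

def OnShortCycle (T : α → α → Prop) (i : α) : Prop :=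
  ∃ j, T i j ∧ (T j i ∨ ∃ l, T j l ∧ T l i)

/-- A walk `i → z → z₂ → k → i` is shortcut by the arc between `i` and `z₂`. -/
lemma onShortCycle_of_reachIn_three (hsc : Semicomplete T) {i k : α} (hki : T k i)
    (hik : i ≠ k) (hr : ReachIn T 3 i k) : OnShortCycle T i := by
  obtain h | ⟨z, hiz, h | ⟨z₂, hzz₂, h | ⟨z₃, hz₂z₃, h⟩⟩⟩ := hr
  · exact absurd h hik
  · subst h
    exact ⟨z, hiz, Or.inl hki⟩
  · subst h
    exact ⟨z, hiz, Or.inr ⟨z₂, hzz₂, hki⟩⟩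
  · change z₃ = k at h
    subst h
    by_cases hz₂i : z₂ = i
    · subst hz₂i
      exact ⟨z, hiz, Or.inl hzz₂⟩
    · rcases hsc i z₂ (Ne.symm hz₂i) with hiz₂ | hz₂i'
      · exact ⟨z₂, hiz₂, Or.inr ⟨z₃, hz₂z₃, hki⟩⟩
      · exact ⟨z, hiz, Or.inr ⟨z₂, hzz₂, hz₂i'⟩⟩

lemma onShortCycle_of_isKKing_three (hsc : Semicomplete T) (hTl : Loopless T) {i k : α}
    (hk : IsKKing T 3 i) (hki : T k i) : OnShortCycle T i :=
  onShortCycle_of_reachIn_three hsc hki (fun h => hTl i (h ▸ hki)) (hk k)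

end ShortCycle

section Landau

variable {α : Type*} {T : α → α → Prop}

open Finset in
/-- If `j` has maximum out-degree inside `S` and `y ∈ S` beats `j` and all out-neighbours of
`j` in `S`, then `y` would have larger out-degree inside `S`. -/
lemma reachIn_two_of_forall_card_le [DecidableEq α] [DecidableRel T] (hsc : Semicomplete T)
    (hTl : Loopless T) {S : Finset α} {j y : α} (hj : j ∈ S) (hy : y ∈ S)
    (hmax : ∀ z ∈ S, #{w ∈ S | T z w} ≤ #{w ∈ S | T j w}) : ReachIn T 2 j y := by
  by_cases hyj : y = j
  · rw [hyj]
    exact ReachIn.refl _ _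
  by_cases hjy : T j y
  · exact Or.inr ⟨y, hjy, Or.inl rfl⟩
  by_cases hpath : ∃ z, T j z ∧ T z y
  · obtain ⟨z, hjz, hzy⟩ := hpath
    exact Or.inr ⟨z, hjz, Or.inr ⟨y, hzy, rfl⟩⟩
  exfalso
  push Not at hpath
  have hyj' : T y j := (hsc j y (Ne.symm hyj)).resolve_left hjy
  have hsub : insert j {w ∈ S | T j w} ⊆ {w ∈ S | T y w} := by
    intro z hz
    rcases mem_insert.mp hz with rfl | hz
    · exact mem_filter.mpr ⟨hj, hyj'⟩
    · rw [mem_filter] at hz ⊢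
      have hzy : z ≠ y := by
        rintro rfl
        exact hjy hz.2
      exact ⟨hz.1, (hsc z y hzy).resolve_left (hpath z hz.2)⟩
  have hcard := card_le_card hsub
  rw [card_insert_of_notMem (by simp [hTl j])] at hcard
  exact absurd (hmax y hy) (by omega)

lemma exists_adj_isKKing_two [Fintype α] (hsc : Semicomplete T) (hTl : Loopless T) {i : α}
    (hi : ∃ j, T j i) : ∃ j, T j i ∧ IsKKing T 2 j := by
  classical
  set S : Finset α := {j | T j i}
  have hS : S.Nonempty := by
    obtain ⟨j, hj⟩ := hi
    exact ⟨j, by simpa [S] using hj⟩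
  obtain ⟨j, hjS, hmax⟩ := S.exists_max_image (fun z => {w ∈ S | T z w}.card) hS
  have hji : T j i := by simpa [S] using hjS
  refine ⟨j, hji, fun y => ?_⟩
  by_cases hyi : y = i
  · exact Or.inr ⟨i, hji, Or.inl hyi.symm⟩
  by_cases hyS : T y i
  · exact reachIn_two_of_forall_card_le hsc hTl hjS (by simpa [S] using hyS) hmax
  · have hiy : T i y := (hsc i y (Ne.symm hyi)).resolve_right hyS
    exact Or.inr ⟨i, hji, Or.inr ⟨y, hiy, rfl⟩⟩

end Landau

section Composition

variable {t : ℕ} {T : Fin t → Fin t → Prop} {V : Fin t → Type*} {H : ∀ i, V i → V i → Prop}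

lemma reflTransGen_fst_of_comp {x y : Σ i, V i}
    (h : Relation.ReflTransGen (Comp T V H) x y) : Relation.ReflTransGen T x.1 y.1 := by
  refine h.lift' Sigma.fst fun p q hpq => ?_
  rcases hpq with hpq | ⟨hpq, _⟩
  · exact .single hpq
  · change Relation.ReflTransGen T p.1 q.1
    rw [hpq]

variable [∀ i, Nonempty (V i)]

lemma isKKing_of_isKKing_comp {n : ℕ} {i : Fin t} {v : V i}
    (hk : IsKKing (Comp T V H) n ⟨i, v⟩) : IsKKing T n i := by
  intro j
  by_cases hij : i = j
  · rw [hij]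
    exact ReachIn.refl _ _
  · exact (hk ⟨j, Classical.arbitrary _⟩).fst_of_comp

lemma isKKing_comp_of_onShortCycle {i : Fin t} (hk : IsKKing T 3 i) (hc : OnShortCycle T i)
    (v : V i) : IsKKing (Comp T V H) 3 ⟨i, v⟩ := by
  rintro ⟨j, w⟩
  by_cases hij : i = j
  · subst hij
    obtain ⟨c, hic, hci | ⟨l, hcl, hli⟩⟩ := hc
    · exact Or.inr ⟨⟨c, Classical.arbitrary _⟩, Or.inl hic,
        Or.inr ⟨⟨i, w⟩, Or.inl hci, Or.inl rfl⟩⟩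
    · exact Or.inr ⟨⟨c, Classical.arbitrary _⟩, Or.inl hic,
        Or.inr ⟨⟨l, Classical.arbitrary _⟩, Or.inl hcl, Or.inr ⟨⟨i, w⟩, Or.inl hli, rfl⟩⟩⟩
  · exact (hk j).comp_of_ne hij v w

lemma isKKing_comp_of_isKKing (hsc : Semicomplete T) (hTl : Loopless T) {i : Fin t}
    (hk : IsKKing T 3 i) (hi : ∃ k, T k i) (v : V i) : IsKKing (Comp T V H) 3 ⟨i, v⟩ :=
  let ⟨_, hki⟩ := hi
  isKKing_comp_of_onShortCycle hk (onShortCycle_of_isKKing_three hsc hTl hk hki) v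

lemma exists_adj_of_isStrong_comp (hs : IsStrong (Comp T V H)) {i j : Fin t} (hji : j ≠ i) :
    ∃ k, T k i := by
  have hr := reflTransGen_fst_of_comp
    (hs ⟨j, Classical.arbitrary (V j)⟩ ⟨i, Classical.arbitrary (V i)⟩)
  obtain ⟨k, -, hki⟩ := Relation.TransGen.tail'_iff.mp
    ((Relation.reflTransGen_iff_eq_or_transGen.mp hr).resolve_left hji.symm)
  exact ⟨k, hki⟩

end Composition

theorem stmt6_general {t : ℕ} (ht : 2 ≤ t) (V : Fin t → Type u)
    [∀ i, Nonempty (V i)] (T : Fin t → Fin t → Prop) (H : ∀ i, V i → V i → Prop)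
    (hTl : Loopless T) (hsc : Semicomplete T) :
    ((∀ i : Fin t, ∃ j, T j i) → (∃ x : Σ i, V i, IsKKing (Comp T V H) 3 x) →
      ∃ x y : Σ i, V i, x ≠ y ∧ IsKKing (Comp T V H) 3 x ∧ IsKKing (Comp T V H) 3 y) ∧
    (IsStrong (Comp T V H) →
      (∃ x : Σ i, V i, IsKKing (Comp T V H) 3 x) ∧
      ∀ (i : Fin t) (v : V i), IsKKing (Comp T V H) 3 ⟨i, v⟩ ↔ IsKKing T 3 i) := by
  have three_of_two : ∀ {j}, IsKKing T 2 j → IsKKing T 3 j := fun h y => (h y).succ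
  constructor
  · rintro hns ⟨⟨i, v⟩, hx⟩
    obtain ⟨j, hji, hj⟩ := exists_adj_isKKing_two hsc hTl (hns i)
    refine ⟨⟨i, v⟩, ⟨j, Classical.arbitrary _⟩, fun h => hTl i ?_, hx,
      isKKing_comp_of_isKKing hsc hTl (three_of_two hj) (hns j) _⟩
    obtain rfl : i = j := congrArg Sigma.fst h
    exact hji
  · intro hs
    have hns : ∀ i : Fin t, ∃ k, T k i := fun i =>
      let ⟨_, hji⟩ := Fintype.exists_ne_of_one_lt_card (by rw [Fintype.card_fin]; omega) i
      exists_adj_of_isStrong_comp hs hji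
    obtain ⟨j, -, hj⟩ := exists_adj_isKKing_two hsc hTl (hns ⟨0, by omega⟩)
    refine ⟨⟨⟨j, Classical.arbitrary _⟩,
      isKKing_comp_of_isKKing hsc hTl (three_of_two hj) (hns j) _⟩, fun i v => ?_⟩
    exact ⟨isKKing_of_isKKing_comp, fun hk => isKKing_comp_of_isKKing hsc hTl hk (hns i) v⟩

/-- Let `Q = T[H₁,…,H_t]` be a semicomplete composition. If `T` has no source
and `Q` has a 3-king, then `Q` has at least two 3-kings. In particular, if `Q` is strong then
`Q` has a 3-king and a vertex of `H_i` is a 3-king of `Q` iff `u_i` is a 3-king of `T`. -/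
theorem stmt6 {t : ℕ} (ht : 2 ≤ t) (V : Fin t → Type u) [∀ i, Fintype (V i)]
    [∀ i, Nonempty (V i)] (T : Fin t → Fin t → Prop) (H : ∀ i, V i → V i → Prop)
    (hTl : Loopless T) (hHl : ∀ i, Loopless (H i)) (hsc : Semicomplete T) :
    ((∀ i : Fin t, ∃ j, T j i) → (∃ x : Σ i, V i, IsKKing (Comp T V H) 3 x) →
      ∃ x y : Σ i, V i, x ≠ y ∧ IsKKing (Comp T V H) 3 x ∧ IsKKing (Comp T V H) 3 y) ∧
    (IsStrong (Comp T V H) →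
      (∃ x : Σ i, V i, IsKKing (Comp T V H) 3 x) ∧
      ∀ (i : Fin t) (v : V i), IsKKing (Comp T V H) 3 ⟨i, v⟩ ↔ IsKKing T 3 i) :=
  stmt6_general ht V T H hTl hsc
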